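/- arXiv:2006.11922 — 6 statements merged into one kernel-verified Lean document; each statement's English description precedes it below -/
import Mathlib

section
/- The image V of S is stable under integer translations: V + ℤ = V, i.e. for every v ∈ V and every n ∈ ℤ one has v + n ∈ V, and conversely every element of V is of this form. -/
/-- `e(w) = exp(2πiw)`. -/
noncomputable def e (w : ℂ) : ℂ := Complex.exp (2 * Real.pi * Complex.I * w)

/-- The Fredholm series `f(z) = ∑_{n=0}^∞ z^{2^n}`. -/
noncomputable def f (z : ℂ) : ℂ := ∑' n : ℕ, z ^ (2 ^ n)

/-- `F(w) = f(e(w)) = ∑_{n=0}^∞ e(2^n w)` on the upper half-plane. -/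
noncomputable def F (w : ℂ) : ℂ := ∑' n : ℕ, e ((2 ^ n : ℕ) * w)

/-- `G(w) = ∑_{l=1}^∞ e(−1/2^l)(e(w/2^l) − 1)` (indexing: `l = l' + 1`, `l' : ℕ`). -/
noncomputable def G (w : ℂ) : ℂ :=
  ∑' l : ℕ, e (-(1 / 2 ^ (l + 1))) * (e (w / 2 ^ (l + 1)) - 1)

/-- `S = F + G` on the upper half-plane. -/
noncomputable def S (w : ℂ) : ℂ := F w + G w

/-- The upper half-plane `ℍ = {w : ℂ | Im w > 0}`. -/
def UHP : Set ℂ := {w : ℂ | 0 < w.im}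

/-- `V = S(ℍ)`, the image of `S` on the upper half-plane. -/
noncomputable def V : Set ℂ := S '' UHP

/-!
The key identity is `S (2w - 1) = S w - 1` on `ℍ`; since `w ↦ 2w - 1` is a bijection of `ℍ`,
it gives `V - 1 = V`. For `F` it is the Fredholm functional equation `f (z²) = f z - z` at
`z = e w`. For `G`, each term equals `(e ((w - 1)/2^l) - 1) - (e (-1/2^l) - 1)`, so
`G w = g (w - 1) - g (-1)` with `g z = ∑_{l ≥ 1} (e (z/2^l) - 1)`, and reindexing gives
`g (2z) = g z + e z - 1`.
-/

open Complex

lemma e_add (z w : ℂ) : e (z + w) = e z * e w := by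
  rw [e, e, e, ← exp_add, mul_add]

lemma e_intCast (n : ℤ) : e n = 1 := by
  rw [e, mul_comm, exp_int_mul_two_pi_mul_I]

lemma e_natCast_mul (n : ℕ) (w : ℂ) : e (n * w) = e w ^ n := by
  rw [e, e, ← exp_nat_mul]; ring_nf

lemma norm_e (w : ℂ) : ‖e w‖ = Real.exp (-(2 * Real.pi * w.im)) := by
  simp [e, norm_exp, mul_re, mul_im]

lemma norm_e_lt_one {w : ℂ} (hw : 0 < w.im) : ‖e w‖ < 1 := by
  rw [norm_e, Real.exp_lt_one_iff, neg_lt_zero]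
  positivity

lemma e_sub_one (w : ℂ) : e (w - 1) = e w := by
  rw [sub_eq_add_neg, e_add, ← Int.cast_one, ← Int.cast_neg, e_intCast, mul_one]

lemma e_two_mul_sub_one (w : ℂ) : e (2 * w - 1) = e w ^ 2 := by
  rw [e_sub_one, ← Nat.cast_ofNat, e_natCast_mul]

lemma summable_pow_two_pow {z : ℂ} (hz : ‖z‖ < 1) : Summable fun n : ℕ => z ^ 2 ^ n := by
  refine .of_norm_bounded (summable_geometric_of_lt_one (norm_nonneg z) hz) fun n => ?_
  rw [norm_pow]
  exact pow_le_pow_of_le_one (norm_nonneg z) hz.le Nat.lt_two_pow_self.le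

lemma f_sq {z : ℂ} (hz : ‖z‖ < 1) : f (z ^ 2) = f z - z := by
  rw [f, f, (summable_pow_two_pow hz).tsum_eq_zero_add]
  simp only [pow_succ' 2, pow_mul, pow_zero, pow_one, add_sub_cancel_left]

lemma F_eq_f_e (w : ℂ) : F w = f (e w) := by
  simp only [F, f, e_natCast_mul]

lemma F_two_mul_sub_one {w : ℂ} (hw : 0 < w.im) : F (2 * w - 1) = F w - e w := by
  rw [F_eq_f_e, F_eq_f_e, e_two_mul_sub_one, f_sq (norm_e_lt_one hw)]

lemma summable_cexp_sub_one {u : ℕ → ℂ} (hu : Summable u) : Summable fun n => cexp (u n) - 1 := by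
  have hexp : (fun z => cexp z - 1) =O[nhds 0] id := by
    simpa [Function.id_def] using (hasDerivAt_exp 0).isBigO_sub
  exact .of_norm (hexp.comp_summable_norm hu.norm)

noncomputable def g (z : ℂ) : ℂ := ∑' l : ℕ, (e (z / 2 ^ (l + 1)) - 1)

lemma summable_e_div_two_pow_sub_one (z : ℂ) :
    Summable fun l : ℕ => e (z / 2 ^ l) - 1 := by
  have hu := (summable_geometric_of_norm_lt_one (by norm_num : ‖(2 : ℂ)⁻¹‖ < 1)).mul_left
    (2 * Real.pi * I * z)
  refine (summable_cexp_sub_one hu).congr fun l => ?_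
  rw [e, div_eq_mul_inv, inv_pow, mul_assoc]

lemma g_two_mul (z : ℂ) : g (2 * z) = g z + e z - 1 := by
  have h (l : ℕ) : 2 * z / 2 ^ (l + 1) = z / 2 ^ l := by
    rw [pow_succ', mul_div_mul_left z _ two_ne_zero]
  rw [g, g]
  simp only [h]
  rw [(summable_e_div_two_pow_sub_one z).tsum_eq_zero_add, pow_zero, div_one]
  ring

lemma G_eq_g_sub (w : ℂ) : G w = g (w - 1) - g (-1) := by
  have hs (z : ℂ) := (summable_nat_add_iff 1).2 (summable_e_div_two_pow_sub_one z)
  rw [G, g, g, ← (hs _).tsum_sub (hs _)]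
  congr 1 with l
  rw [sub_div, sub_eq_add_neg (w / _), e_add, neg_div]
  ring

lemma G_two_mul_sub_one (w : ℂ) : G (2 * w - 1) = G w + e w - 1 := by
  have h : 2 * w - 1 - 1 = 2 * (w - 1) := by ring
  rw [G_eq_g_sub, G_eq_g_sub, h, g_two_mul, e_sub_one]
  ring

lemma S_two_mul_sub_one {w : ℂ} (hw : 0 < w.im) : S (2 * w - 1) = S w - 1 := by
  rw [S, S, F_two_mul_sub_one hw, G_two_mul_sub_one]
  ring

lemma two_mul_sub_one_mem_UHP_iff {w : ℂ} : 2 * w - 1 ∈ UHP ↔ w ∈ UHP := by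
  simp [UHP]

lemma sub_one_mem_V {v : ℂ} (hv : v ∈ V) : v - 1 ∈ V := by
  obtain ⟨w, hw, rfl⟩ := hv
  exact ⟨2 * w - 1, two_mul_sub_one_mem_UHP_iff.2 hw, S_two_mul_sub_one hw⟩

lemma add_one_mem_V_iff {v : ℂ} : v + 1 ∈ V ↔ v ∈ V := by
  refine ⟨fun h => by simpa using sub_one_mem_V h, ?_⟩
  rintro ⟨w, hw, rfl⟩
  have hw' : 2 * ((w + 1) / 2) - 1 = w := by ring
  have hUHP : (w + 1) / 2 ∈ UHP := two_mul_sub_one_mem_UHP_iff.1 (hw'.symm ▸ hw)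
  refine ⟨(w + 1) / 2, hUHP, ?_⟩
  rw [eq_comm, ← eq_sub_iff_add_eq, ← S_two_mul_sub_one hUHP, hw']

lemma add_intCast_mem_V_iff {v : ℂ} (n : ℤ) : v + n ∈ V ↔ v ∈ V := by
  induction n using Int.induction_on with
  | zero => simp
  | succ k ih => rw [Int.cast_add, Int.cast_one, ← add_assoc, add_one_mem_V_iff, ih]
  | pred k ih =>
    rw [← add_one_mem_V_iff, ← ih]
    push_cast
    ring_nf

/-- The image `V` of `S` is stable under integer translations: `V + ℤ = V`. -/
theorem V_add_int_eq_V :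
    {u : ℂ | ∃ v ∈ V, ∃ n : ℤ, u = v + (n : ℂ)} = V := by
  ext u
  constructor
  · rintro ⟨v, hv, n, rfl⟩
    exact (add_intCast_mem_V_iff n).2 hv
  · exact fun hu => ⟨u, hu, 0, by simp⟩
end

section
/- Let k ≥ 2 be an integer, q = 3^k, and let s be an integer coprime to q. Then ∑_{m=0}^{φ(q)−1} e(2^m s / q) = 0, where φ is Euler's totient function. -/
/-!
Since `2 = -1 · (1 - 3)` is a product of commuting elements of orders `2` and `3^(k-1)`
modulo `3^k`, it is a primitive root, so `m ↦ 2^m s` runs once over the units of `ZMod (3^k)`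
and the sum is the Ramanujan sum `c_{3^k}(1) = μ(3^k)`. That sum vanishes for every
non-squarefree modulus `n`: if `d² ∣ n` with `d ≠ 1`, then `n / d` is a nonzero nilpotent,
translation by it permutes the units, and so the sum is fixed under multiplication by
`e(1/d) ≠ 1`.
-/

open Finset

theorem AddChar.sum_units_eq_zero_of_isNilpotent {R M : Type*} [CommRing R] [Fintype Rˣ]
    [CommRing M] [NoZeroDivisors M] (ψ : AddChar R M) {x : R} (hx : IsNilpotent x)
    (hψx : ψ x ≠ 1) : ∑ u : Rˣ, ψ u = 0 := by
  let shift : Rˣ → Rˣ := fun u ↦ (hx.isUnit_add_left_of_commute u.isUnit (.all _ _)).unit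
  have hshift : Function.Bijective shift := Finite.injective_iff_bijective.mp
    fun u w h ↦ Units.ext (add_right_cancel (congrArg Units.val h))
  have hinv : ∑ u : Rˣ, ψ u = ψ x * ∑ u : Rˣ, ψ u := calc
    ∑ u : Rˣ, ψ u = ∑ u : Rˣ, ψ (shift u) :=
      (Fintype.sum_bijective shift hshift _ _ fun _ ↦ rfl).symm
    _ = ψ x * ∑ u : Rˣ, ψ u := by
      simp only [shift, IsUnit.unit_spec, AddChar.map_add_eq_mul, mul_sum, mul_comm]
  have hfactor : (ψ x - 1) * ∑ u : Rˣ, ψ u = 0 := by linear_combination -hinv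
  exact (mul_eq_zero.mp hfactor).resolve_left (sub_ne_zero.mpr hψx)

theorem sum_range_orderOf_pow_mul {G M : Type*} [Group G] [Fintype G] [AddCommMonoid M]
    {g : G} (hg : orderOf g = Fintype.card G) (v : G) (f : G → M) :
    ∑ m ∈ range (orderOf g), f (g ^ m * v) = ∑ x, f x := by
  classical
  have hinj : Set.InjOn (g ^ ·) (range (orderOf g)) := fun a ha b hb ↦
    pow_injOn_Iio_orderOf (by simpa using ha) (by simpa using hb)
  have himage : (range (orderOf g)).image (g ^ ·) = univ :=
    eq_univ_of_card _ (by rw [card_image_of_injOn hinj, card_range, hg])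
  rw [← Equiv.sum_comp (Equiv.mulRight v), ← himage, sum_image hinj]
  rfl

theorem ZMod.sum_units_stdAddChar_eq_zero_of_not_squarefree {n : ℕ} [NeZero n]
    (hn : ¬ Squarefree n) : ∑ u : (ZMod n)ˣ, ZMod.stdAddChar (u : ZMod n) = 0 := by
  obtain ⟨d, ⟨m, rfl⟩, hd⟩ : ∃ d, d * d ∣ n ∧ d ≠ 1 := by
    simpa [Squarefree] using hn
  have hdm : d * m ≠ 0 := fun h ↦ NeZero.ne (d * d * m) (by rw [mul_assoc, h, mul_zero])
  refine AddChar.sum_units_eq_zero_of_isNilpotent _ (x := ((d * m : ℕ) : ZMod (d * d * m))) ?_ ?_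
  · refine ⟨2, ?_⟩
    rw [← Nat.cast_pow, ZMod.natCast_eq_zero_iff]
    exact ⟨m, by ring⟩
  · rw [← AddChar.map_zero_eq_one (ZMod.stdAddChar (N := d * d * m)),
      ZMod.injective_stdAddChar.ne_iff, Ne, ZMod.natCast_eq_zero_iff, mul_assoc]
    intro h
    exact hd (Nat.dvd_one.mp
      (Nat.dvd_of_mul_dvd_mul_right (Nat.pos_of_ne_zero hdm) (by simpa using h)))

theorem ZMod.orderOf_two_three_pow {k : ℕ} (hk : k ≠ 0) :
    orderOf (2 : ZMod (3 ^ k)) = Nat.totient (3 ^ k) := by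
  obtain ⟨n, rfl⟩ := Nat.exists_eq_succ_of_ne_zero hk
  have : Fact (1 < 3 ^ (n + 1)) := ⟨Nat.one_lt_pow hk (by norm_num)⟩
  have hneg : orderOf (-1 : ZMod (3 ^ (n + 1))) = 2 := by
    rw [orderOf_neg_one, ZMod.ringChar_zmod_n, if_neg]
    exact (Odd.pow (by decide : Odd 3)).ne_two_of_dvd_nat dvd_rfl
  have hone_add : orderOf (1 + (3 : ℕ) * ((-1 : ℤ) : ZMod (3 ^ (n + 1)))) = 3 ^ n :=
    ZMod.orderOf_one_add_mul_prime Nat.prime_three (by norm_num) _ (by norm_num) n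
  have hsplit :
      (2 : ZMod (3 ^ (n + 1))) = -1 * (1 + (3 : ℕ) * ((-1 : ℤ) : ZMod (3 ^ (n + 1)))) := by
    push_cast; ring
  rw [hsplit, (Commute.all _ _).orderOf_mul_eq_mul_orderOf_of_coprime (by
      rw [hneg, hone_add]; exact Nat.Coprime.pow_right _ (by norm_num)),
    hneg, hone_add, Nat.totient_prime_pow_succ Nat.prime_three, mul_comm]

theorem e_intCast_div_natCast_eq_stdAddChar (N : ℕ) [NeZero N] (j : ℤ) :
    e (j / N) = ZMod.stdAddChar (j : ZMod N) := by
  rw [ZMod.stdAddChar_coe, e, mul_div_assoc]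

/-- For `k ≥ 2`, `q = 3^k` and `s` coprime to `q`, the Ramanujan sum
`∑_{m=0}^{φ(q)−1} e(2^m s / q)` vanishes. -/
theorem ramanujan_sum_vanishes (k : ℕ) (hk : 2 ≤ k) (s : ℤ)
    (hs : IsCoprime s (3 ^ k : ℤ)) :
    ∑ m ∈ Finset.range (Nat.totient (3 ^ k)),
      e ((2 ^ m * s : ℤ) / (3 ^ k : ℕ)) = 0 := by
  have hsq : ¬ Squarefree (3 ^ k) := fun h ↦ by
    simpa using h 3 (pow_dvd_pow 3 hk)
  obtain ⟨v, hv⟩ : IsUnit (s : ZMod (3 ^ k)) := by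
    have h0 : ((3 ^ k : ℤ) : ZMod (3 ^ k)) = 0 := by exact_mod_cast ZMod.natCast_self (3 ^ k)
    simpa [h0, isCoprime_zero_right] using hs.intCast (R := ZMod (3 ^ k))
  let u := ZMod.unitOfCoprime 2 (Nat.Coprime.pow_right k (by norm_num : Nat.Coprime 2 3))
  have hu : orderOf u = Nat.totient (3 ^ k) := by
    rw [← orderOf_units, ZMod.coe_unitOfCoprime, Nat.cast_ofNat,
      ZMod.orderOf_two_three_pow (by omega)]
  calc ∑ m ∈ range (Nat.totient (3 ^ k)), e ((2 ^ m * s : ℤ) / (3 ^ k : ℕ))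
      = ∑ m ∈ range (orderOf u),
          ZMod.stdAddChar ((u ^ m * v : (ZMod (3 ^ k))ˣ) : ZMod (3 ^ k)) := by
        refine sum_congr (by rw [hu]) fun m _ ↦ ?_
        rw [e_intCast_div_natCast_eq_stdAddChar]
        push_cast [u, hv, ZMod.coe_unitOfCoprime]
        rfl
    _ = ∑ w : (ZMod (3 ^ k))ˣ, ZMod.stdAddChar (w : ZMod (3 ^ k)) :=
        sum_range_orderOf_pow_mul (by rw [hu, ZMod.card_units_eq_totient]) v
          (fun w ↦ ZMod.stdAddChar (w : ZMod (3 ^ k)))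
    _ = 0 := ZMod.sum_units_stdAddChar_eq_zero_of_not_squarefree hsq
end

section
/- Let a ≥ 1 be an integer and set q = 3^{2^a}, θ₀ = 1/q and n₀ = φ(q) = 2·3^{2^a − 1}. Then q ≡ 1 (mod 2^{a+2}), and for every integer l with 0 ≤ l ≤ a the real number 2^{n₀−l}·θ₀ − (θ₀/2^l − 1/2^l) is an integer, i.e. 2^{n₀−l}θ₀ ≡ θ₀/2^l − 1/2^l (mod ℤ). -/
/-! Each squaring in `x ^ 2 ^ (a + 1) - 1 = (x ^ 2 ^ a - 1)(x ^ 2 ^ a + 1)` gains a factor `2`,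
starting from `8 ∣ x ^ 2 - 1` for odd `x`; hence `q = 3 ^ 2 ^ a ≡ 1 (mod 2 ^ (a + 2))`, while
Euler gives `q ∣ 2 ^ φ(q) - 1`. As `2 ^ l` and `q` are coprime, `2 ^ l * q ∣ 2 ^ n₀ + q - 1`,
and the real number in question is exactly `(2 ^ n₀ + q - 1) / (2 ^ l * q)`. -/

theorem Int.two_pow_add_two_dvd_pow_two_pow_sub_one {x : ℤ} (hx : Odd x) {a : ℕ}
    (ha : 1 ≤ a) : 2 ^ (a + 2) ∣ x ^ 2 ^ a - 1 := by
  induction a, ha using Nat.le_induction with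
  | base => exact Int.eight_dvd_sq_sub_one_of_odd hx
  | succ a _ ih =>
    have hsq : x ^ 2 ^ (a + 1) - 1 = (x ^ 2 ^ a - 1) * (x ^ 2 ^ a + 1) := by ring
    have htwo : (2 : ℤ) ∣ x ^ 2 ^ a + 1 := even_iff_two_dvd.mp hx.pow.add_one
    rw [hsq, pow_succ]
    exact mul_dvd_mul ih htwo

theorem Int.two_pow_mul_dvd_two_pow_add_sub_one {q : ℤ} {n l : ℕ} (hqn : q ∣ 2 ^ n - 1)
    (hlq : 2 ^ l ∣ q - 1) (hln : l ≤ n) : 2 ^ l * q ∣ 2 ^ n + q - 1 := by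
  obtain ⟨k, hk⟩ := hlq
  have hcop : IsCoprime ((2 : ℤ) ^ l) q := ⟨-k, 1, by linear_combination hk⟩
  refine hcop.mul_dvd ?_ ?_
  · rw [add_sub_assoc, hk]
    exact dvd_add (pow_dvd_pow 2 hln) (dvd_mul_right _ _)
  · rw [add_sub_right_comm]
    exact dvd_add hqn dvd_rfl

theorem exists_int_eq_of_two_pow_mul_dvd {q : ℤ} {n l : ℕ} (hq : q ≠ 0) (hln : l ≤ n)
    (hdvd : 2 ^ l * q ∣ 2 ^ n + q - 1) :
    ∃ z : ℤ, (2 : ℝ) ^ (n - l) * (1 / (q : ℝ)) - ((1 / (q : ℝ)) / 2 ^ l - 1 / 2 ^ l) =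
      z := by
  obtain ⟨z, hz⟩ := hdvd
  refine ⟨z, ?_⟩
  have hzR : (2 : ℝ) ^ n + q - 1 = 2 ^ l * q * z := by exact_mod_cast hz
  have hpow : (2 : ℝ) ^ (n - l) * 2 ^ l = 2 ^ n := by rw [← pow_add, Nat.sub_add_cancel hln]
  have hqR : (q : ℝ) ≠ 0 := by exact_mod_cast hq
  field_simp
  linear_combination hpow + hzR

/-- Let `a ≥ 1`, `q = 3^(2^a)`, `θ₀ = 1/q`, `n₀ = φ(q) = 2·3^(2^a − 1)`. Then
`q ≡ 1 (mod 2^(a+2))`, and for `0 ≤ l ≤ a` one has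
`2^(n₀−l)·θ₀ ≡ θ₀/2^l − 1/2^l (mod ℤ)`. -/
theorem congruence_two_pow_theta (a : ℕ) (ha : 1 ≤ a) :
    (3 ^ (2 ^ a)) % (2 ^ (a + 2)) = 1 ∧
    Nat.totient (3 ^ (2 ^ a)) = 2 * 3 ^ (2 ^ a - 1) ∧
    ∀ l : ℕ, l ≤ a →
      ∃ z : ℤ,
        (2 : ℝ) ^ (2 * 3 ^ (2 ^ a - 1) - l) * (1 / (3 ^ (2 ^ a) : ℝ)) -
          ((1 / (3 ^ (2 ^ a) : ℝ)) / 2 ^ l - 1 / 2 ^ l) = (z : ℝ) := by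
  have hlift : (2 : ℤ) ^ (a + 2) ∣ 3 ^ 2 ^ a - 1 :=
    Int.two_pow_add_two_dvd_pow_two_pow_sub_one (by decide) ha
  have htot : Nat.totient (3 ^ 2 ^ a) = 2 * 3 ^ (2 ^ a - 1) := by
    rw [Nat.totient_prime_pow Nat.prime_three (by positivity)]
    ring
  refine ⟨?_, htot, fun l hl => ?_⟩
  · have hmod : 1 ≡ 3 ^ 2 ^ a [MOD 2 ^ (a + 2)] :=
      Nat.modEq_iff_dvd.mpr (by exact_mod_cast hlift)
    rw [← hmod, Nat.one_mod_eq_one]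
    exact (Nat.one_lt_two_pow (by omega)).ne'
  have heuler : (3 ^ 2 ^ a : ℤ) ∣ 2 ^ (2 * 3 ^ (2 ^ a - 1)) - 1 := by
    have hcop : Nat.Coprime 2 (3 ^ 2 ^ a) := Nat.Coprime.pow_right _ (by decide)
    have := (Nat.ModEq.pow_totient hcop).symm.dvd
    rw [htot] at this
    exact_mod_cast this
  have hln : l ≤ 2 * 3 ^ (2 ^ a - 1) := by
    have := Nat.lt_two_pow_self (n := a)
    have := Nat.lt_pow_self (by decide : 1 < 3) (n := 2 ^ a - 1)
    omega
  have hdvd := Int.two_pow_mul_dvd_two_pow_add_sub_one heuler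
    ((pow_dvd_pow 2 (by omega : l ≤ a + 2)).trans hlift) hln
  simpa using exists_int_eq_of_two_pow_mul_dvd (by positivity) hln hdvd
end

section
/- For every integer m ≥ 1 one has the linear relation (1 − 2^m)·c(m) = ∑_{h=1}^m 2^{m−h}·binom(m,h)·c(m+h). -/
/-- `k_l = e(1/2^l) − 1` for `l ≥ 1`. -/
noncomputable def kSeq (l : ℕ) : ℂ := e (1 / 2 ^ l) - 1

/-- `c(m) = ∑_{l=1}^∞ k_l^m` (indexing: `l = l' + 1`, `l' : ℕ`). -/
noncomputable def cc (m : ℕ) : ℂ := ∑' l : ℕ, (kSeq (l + 1)) ^ m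

/-!
Since `e(1/2^l) = e(1/2^(l+1))^2`, the `k_l` satisfy `k_l = k_(l+1) * (2 + k_(l+1))`, also at
`l = 0`, where `k_0 = e(1) - 1 = 0`. Hence for `m ≥ 1`,
`c(m) = ∑_{l ≥ 0} k_l^m = ∑_{l ≥ 0} k_(l+1)^m (2 + k_(l+1))^m`, and expanding `(2 + k)^m`
binomially and exchanging the finite and the infinite sum gives
`c(m) = ∑_{h=0}^m 2^(m-h) binom(m,h) c(m+h)`, whose `h = 0` term is `2^m c(m)`.
-/

open Finset

theorem mul_two_add_pow {R : Type*} [CommSemiring R] (x : R) (m : ℕ) :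
    (x * (2 + x)) ^ m = ∑ h ∈ range (m + 1), 2 ^ (m - h) * (m.choose h : R) * x ^ (m + h) := by
  rw [mul_pow, add_comm, add_pow, mul_sum]
  refine sum_congr rfl fun h _ => ?_
  ring

theorem kSeq_zero : kSeq 0 = 0 := by
  simp [kSeq, e]

theorem kSeq_eq_mul_two_add (l : ℕ) : kSeq l = kSeq (l + 1) * (2 + kSeq (l + 1)) := by
  have : e (1 / 2 ^ l) = e (1 / 2 ^ (l + 1)) ^ 2 := by
    rw [e, e, ← Complex.exp_nat_mul]
    congr 1
    field_simp
    ring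
  rw [kSeq, kSeq, this]
  ring

theorem norm_kSeq_le (l : ℕ) : ‖kSeq l‖ ≤ 2 * Real.pi * (1 / 2) ^ l := by
  have hk : kSeq l = Complex.exp (Complex.I * ↑(2 * Real.pi * (1 / 2) ^ l)) - 1 := by
    rw [kSeq, e, one_div_pow]; push_cast; congr 2; ring
  rw [hk]
  exact Real.norm_exp_I_mul_ofReal_sub_one_le.trans_eq (Real.norm_of_nonneg (by positivity))

theorem summable_kSeq_pow {n : ℕ} (hn : n ≠ 0) : Summable fun l => kSeq l ^ n := by
  refine Summable.of_norm_bounded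
    ((summable_geometric_of_lt_one (r := (1 / 2 : ℝ) ^ n) (by positivity)
      (pow_lt_one₀ (by norm_num) (by norm_num) hn)).mul_left ((2 * Real.pi) ^ n)) fun l => ?_
  rw [norm_pow, ← pow_mul, pow_mul', ← mul_pow]
  exact pow_le_pow_left₀ (norm_nonneg _) (norm_kSeq_le l) n

theorem cc_eq_tsum_kSeq_pow {m : ℕ} (hm : m ≠ 0) : cc m = ∑' l, kSeq l ^ m := by
  rw [(summable_kSeq_pow hm).tsum_eq_zero_add, kSeq_zero, zero_pow hm, zero_add, cc]

theorem cc_eq_sum {m : ℕ} (hm : m ≠ 0) :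
    cc m = ∑ h ∈ range (m + 1), 2 ^ (m - h) * (m.choose h : ℂ) * cc (m + h) := by
  have hsum (h : ℕ) : Summable fun l => kSeq (l + 1) ^ (m + h) :=
    (summable_nat_add_iff 1).mpr (summable_kSeq_pow (by omega))
  calc cc m = ∑' l, (kSeq (l + 1) * (2 + kSeq (l + 1))) ^ m := by
        simp_rw [← kSeq_eq_mul_two_add, cc_eq_tsum_kSeq_pow hm]
    _ = ∑ h ∈ range (m + 1), ∑' l, 2 ^ (m - h) * (m.choose h : ℂ) * kSeq (l + 1) ^ (m + h) := by
        simp_rw [mul_two_add_pow]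
        exact Summable.tsum_finsetSum fun h _ => (hsum h).mul_left _
    _ = _ := by simp_rw [tsum_mul_left, cc]

/-- The linear relation `(1 − 2^m)·c(m) = ∑_{h=1}^m 2^{m−h}·binom(m,h)·c(m+h)`. -/
theorem cc_linear_relation (m : ℕ) (hm : 1 ≤ m) :
    (1 - 2 ^ m : ℂ) * cc m =
      ∑ h ∈ Finset.Icc 1 m, (2 : ℂ) ^ (m - h) * (m.choose h : ℂ) * cc (m + h) := by
  have h := cc_eq_sum (Nat.one_le_iff_ne_zero.mp hm)
  rw [range_eq_Ico, sum_eq_sum_Ico_succ_bot m.add_one_pos, zero_add, Ico_add_one_right_eq_Icc] at h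
  simp only [Nat.sub_zero, Nat.choose_zero_right, Nat.cast_one, mul_one, add_zero] at h
  linear_combination h
end

section
/- The additive subsemigroup Γ of ℝ generated by ℤ together with the numbers σ_m (m ≥ 1) is dense in ℝ: the closure of the set of all finite sums of elements of ℤ ∪ {σ_m : m ≥ 1} is all of ℝ. -/
/-- `c_m = ∑_{l=1}^∞ (e(m/2^l) − 1)` (indexing: `l = l' + 1`, `l' : ℕ`). -/
noncomputable def c (m : ℤ) : ℂ := ∑' l : ℕ, (e ((m : ℂ) / 2 ^ (l + 1)) - 1)

/-- `σ_m = c_m + c_{−m}`, viewed as a real number (it is real since `c_{−m} = conj c_m`). -/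
noncomputable def σR (m : ℤ) : ℝ := (c m + c (-m)).re

/-!
With `θ_l = π / 2^l` one has `σ_m = ∑_{l ≥ 0} (2 cos (m θ_l) - 2)`. The first `k` terms of
`σ_{1+2^k}` and `σ_1` agree, and the remaining ones combine with `σ_1` into
`σ_{1+2^k} - 2σ_1 = ∑_j D(θ_j, θ_{j+k})`, where
`D(a, b) = 2cos(a+b) - 2cos a - 2cos b + 2 = 2(1 - cos a)(1 - cos b) - 2 sin a sin b`.
This is `O(b)`, at most `2b²` for `a, b ∈ [0, π]`, and at most `b² - 4b/π` for `a = θ_1 = π/2`;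
so `σ_{1+2^k} - 2σ_1 ≤ 4π²/4^k - 2/2^k` is negative for large `k`, and it tends to `0`.

Hence `Γ` has arbitrarily small nonzero elements: `kσ_1 - j` by Dirichlet if `σ_1` is
irrational, and `q σ_{1+2^k} - 2p` if `σ_1 = p/q`. A semigroup containing `ℤ` and some `t ≠ 0`
meets every interval of length `|t|`, since it contains `ℤ + ℕ t`.
-/

open Real Filter Topology

theorem exists_abs_sub_intCast_add_nsmul_lt_abs {t : ℝ} (ht : t ≠ 0) (x : ℝ) :
    ∃ n : ℤ, ∃ k : ℕ, |x - (n + k • t)| < |t| := by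
  suffices key : ∀ t > 0, ∀ x : ℝ, ∃ n : ℤ, ∃ k : ℕ, |x - (n + k • t)| < t by
    rcases ht.lt_or_gt with ht | ht
    · obtain ⟨n, k, hnk⟩ := key (-t) (neg_pos.2 ht) (-x)
      refine ⟨-n, k, ?_⟩
      rw [abs_of_neg ht, ← abs_neg]
      convert hnk using 2
      simp only [Int.cast_neg, smul_neg]
      ring
    · simpa only [abs_of_pos ht] using key t ht x
  intro t ht x
  refine ⟨⌊x⌋, ⌊Int.fract x / t⌋₊, ?_⟩
  have hle := Nat.floor_le (div_nonneg (Int.fract_nonneg x) ht.le)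
  have hlt := Nat.lt_floor_add_one (Int.fract x / t)
  rw [le_div_iff₀ ht] at hle
  rw [div_lt_iff₀ ht] at hlt
  rw [nsmul_eq_mul, abs_lt, ← Int.self_sub_floor] at *
  constructor <;> linarith

section SmallElements

variable {S : AddSubmonoid ℝ}

theorem dense_of_zero_mem_closure_diff (hZ : ∀ n : ℤ, (n : ℝ) ∈ S)
    (h0 : (0 : ℝ) ∈ closure ((S : Set ℝ) \ {0})) : Dense (S : Set ℝ) := by
  rw [Metric.dense_iff]
  intro x r hr
  obtain ⟨t, ⟨htS, ht0⟩, htr⟩ := Metric.mem_closure_iff.1 h0 r hr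
  obtain ⟨n, k, hnk⟩ := exists_abs_sub_intCast_add_nsmul_lt_abs ht0 x
  refine ⟨n + k • t, ?_, S.add_mem (hZ n) (S.nsmul_mem htS k)⟩
  rw [Metric.mem_ball, Real.dist_eq, abs_sub_comm]
  rw [dist_zero_left, Real.norm_eq_abs] at htr
  exact hnk.trans htr

theorem zero_mem_closure_diff_of_irrational (hZ : ∀ n : ℤ, (n : ℝ) ∈ S) {ξ : ℝ} (hξS : ξ ∈ S)
    (hξ : Irrational ξ) : (0 : ℝ) ∈ closure ((S : Set ℝ) \ {0}) := by
  refine Metric.mem_closure_iff.2 fun ε hε => ?_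
  obtain ⟨n, hn⟩ := exists_nat_one_div_lt hε
  obtain ⟨j, k, hk, -, hjk⟩ := Real.exists_int_int_abs_mul_sub_le ξ n.succ_pos
  lift k to ℕ using hk.le
  have hmem : k • ξ + ((-j : ℤ) : ℝ) ∈ S := S.add_mem (S.nsmul_mem hξS k) (hZ (-j))
  have hval : k • ξ + ((-j : ℤ) : ℝ) = ((k : ℤ) : ℝ) * ξ - j := by
    rw [nsmul_eq_mul]
    push_cast
    ring
  refine ⟨_, ⟨hmem, ?_⟩, ?_⟩
  · rw [hval]
    exact ((hξ.intCast_mul (by exact_mod_cast hk.ne')).sub_intCast j).ne_zero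
  · rw [dist_zero_left, Real.norm_eq_abs, hval]
    refine hjk.trans_lt (lt_of_le_of_lt ?_ hn)
    gcongr
    linarith

theorem zero_mem_closure_diff_of_tendsto {ι : Type*} {l : Filter ι} [l.NeBot]
    (hZ : ∀ n : ℤ, (n : ℝ) ∈ S) {y : ι → ℝ} (hyS : ∀ i, y i ∈ S) {r : ℚ}
    (hy : Tendsto y l (𝓝 r)) (hne : ∀ᶠ i in l, y i ≠ r) :
    (0 : ℝ) ∈ closure ((S : Set ℝ) \ {0}) := by
  have hr : (r.den : ℝ) * r = r.num := by exact_mod_cast (mul_comm _ _).trans r.mul_den_eq_num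
  have hlim : Tendsto (fun i => r.den • y i + ((-r.num : ℤ) : ℝ)) l (𝓝 0) := by
    have := (hy.const_mul (r.den : ℝ)).add_const (-(r.num : ℝ))
    simpa only [nsmul_eq_mul, Int.cast_neg, hr, add_neg_cancel] using this
  refine mem_closure_of_tendsto hlim ?_
  filter_upwards [hne] with i hi
  refine ⟨S.add_mem (S.nsmul_mem (hyS i) _) (hZ _), ?_⟩
  rw [Set.mem_singleton_iff, nsmul_eq_mul, Int.cast_neg, ← hr, ← mul_neg, ← mul_add]
  exact mul_ne_zero (by exact_mod_cast r.den_ne_zero) (sub_ne_zero.2 hi)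

end SmallElements

noncomputable def sigmaTerm (m : ℤ) (l : ℕ) : ℝ := 2 * cos (m * π / 2 ^ l) - 2

theorem e_div_two_pow_succ (m : ℤ) (l : ℕ) :
    e ((m : ℂ) / 2 ^ (l + 1)) = Complex.exp (((m * π / 2 ^ l : ℝ) : ℂ) * Complex.I) := by
  rw [e, pow_succ]
  push_cast
  ring_nf

theorem summable_e_div_two_pow_succ_sub_one (m : ℤ) :
    Summable fun l : ℕ => e ((m : ℂ) / 2 ^ (l + 1)) - 1 := by
  refine Summable.of_norm_bounded (summable_geometric_two.mul_left (|(m : ℝ)| * π)) fun l => ?_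
  rw [e_div_two_pow_succ, mul_comm]
  refine (Real.norm_exp_I_mul_ofReal_sub_one_le).trans_eq ?_
  simp [abs_of_pos pi_pos, div_eq_mul_inv]

theorem hasSum_sigmaTerm (m : ℤ) : HasSum (sigmaTerm m) (σR m) := by
  unfold σR c
  have h := Complex.hasSum_re ((summable_e_div_two_pow_succ_sub_one m).hasSum.add
    (summable_e_div_two_pow_succ_sub_one (-m)).hasSum)
  convert h using 1
  funext l
  rw [Complex.add_re, Complex.sub_re, Complex.sub_re, e_div_two_pow_succ, e_div_two_pow_succ,
    Complex.exp_ofReal_mul_I_re, Complex.exp_ofReal_mul_I_re, Int.cast_neg, neg_mul, neg_div,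
    cos_neg, Complex.one_re, sigmaTerm]
  ring

theorem sigmaTerm_add_two_pow (m : ℤ) {k l : ℕ} (hl : l < k) :
    sigmaTerm (m + 2 ^ k) l = sigmaTerm m l := by
  obtain ⟨d, rfl⟩ := Nat.exists_eq_add_of_lt hl
  have h : ((m + 2 ^ (l + d + 1) : ℤ) : ℝ) * π / 2 ^ l = m * π / 2 ^ l + (2 ^ d : ℕ) * (2 * π) := by
    push_cast
    field_simp
    ring
  rw [sigmaTerm, sigmaTerm, h, cos_add_nat_mul_two_pi]

noncomputable def cosDefect (a b : ℝ) : ℝ := 2 * cos (a + b) - 2 * cos a - 2 * cos b + 2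

theorem hasSum_cosDefect (k : ℕ) :
    HasSum (fun j : ℕ => cosDefect (π / 2 ^ j) (π / 2 ^ (j + k))) (σR (1 + 2 ^ k) - 2 * σR 1) := by
  have hshift (m : ℤ) := (hasSum_nat_add_iff' k).2 (hasSum_sigmaTerm m)
  have hhead :
      ∑ l ∈ Finset.range k, sigmaTerm (1 + 2 ^ k) l = ∑ l ∈ Finset.range k, sigmaTerm 1 l :=
    Finset.sum_congr rfl fun l hl => sigmaTerm_add_two_pow 1 (Finset.mem_range.1 hl)
  have key := ((hshift (1 + 2 ^ k)).sub (hshift 1)).sub (hasSum_sigmaTerm 1)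
  rw [hhead, sub_sub_sub_cancel_right, sub_sub, ← two_mul] at key
  refine key.congr_fun fun j => ?_
  have h : ((1 + 2 ^ k : ℤ) : ℝ) * π / 2 ^ (j + k) = π / 2 ^ j + π / 2 ^ (j + k) := by
    push_cast
    field_simp
    ring
  simp only [sigmaTerm, cosDefect, h, Int.cast_one, one_mul]
  ring

theorem cosDefect_eq (a b : ℝ) :
    cosDefect a b = 2 * (1 - cos a) * (1 - cos b) - 2 * (sin a * sin b) := by
  rw [cosDefect, cos_add]
  ring

theorem Real.one_sub_cos_le_sq_div_two (x : ℝ) : 1 - cos x ≤ x ^ 2 / 2 := by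
  linarith [one_sub_sq_div_two_le_cos (x := x)]

theorem abs_cosDefect_le (a b : ℝ) : |cosDefect a b| ≤ 2 * b ^ 2 + 2 * |b| := by
  have hsin : |sin a * sin b| ≤ |b| := by
    rw [abs_mul]
    nlinarith [abs_sin_le_one a, abs_sin_le_abs (x := b), abs_nonneg (sin b)]
  have hcos : |(1 - cos a) * (1 - cos b)| ≤ b ^ 2 := by
    rw [abs_of_nonneg (mul_nonneg (sub_nonneg.2 (cos_le_one a)) (sub_nonneg.2 (cos_le_one b)))]
    nlinarith [one_sub_cos_le_sq_div_two b, neg_one_le_cos a, sub_nonneg.2 (cos_le_one b)]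
  rw [cosDefect_eq, mul_assoc]
  calc _ ≤ |2 * ((1 - cos a) * (1 - cos b))| + |2 * (sin a * sin b)| := abs_sub _ _
    _ = 2 * |(1 - cos a) * (1 - cos b)| + 2 * |sin a * sin b| := by
      rw [abs_mul 2, abs_mul 2, abs_two]
    _ ≤ 2 * b ^ 2 + 2 * |b| := by linarith

theorem cosDefect_le {a b : ℝ} (ha₀ : 0 ≤ a) (ha : a ≤ π) (hb₀ : 0 ≤ b) (hb : b ≤ π) :
    cosDefect a b ≤ 2 * b ^ 2 := by
  have hsin :=
    mul_nonneg (sin_nonneg_of_nonneg_of_le_pi ha₀ ha) (sin_nonneg_of_nonneg_of_le_pi hb₀ hb)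
  rw [cosDefect_eq]
  nlinarith [one_sub_cos_le_sq_div_two b, neg_one_le_cos a, sub_nonneg.2 (cos_le_one b)]

theorem cosDefect_pi_div_two_le {b : ℝ} (hb₀ : 0 ≤ b) (hb : b ≤ π / 2) :
    cosDefect (π / 2) b ≤ b ^ 2 - 4 / π * b := by
  have hsin := mul_le_sin hb₀ hb
  have h4 : 4 / π * b = 2 * (2 / π * b) := by ring
  rw [cosDefect, cos_add, cos_pi_div_two, sin_pi_div_two]
  linarith [one_sub_cos_le_sq_div_two b]

theorem hasSum_pi_div_two_pow_add (k : ℕ) :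
    HasSum (fun j : ℕ => π / 2 ^ (j + k)) (2 * π / 2 ^ k) := by
  convert hasSum_geometric_two' (2 * π / 2 ^ k) using 2 with j
  rw [pow_add]
  field_simp

theorem pi_div_two_pow_le {n : ℕ} (k : ℕ) (hk : k ≤ n) : π / 2 ^ n ≤ π / 2 ^ k :=
  div_le_div_of_nonneg_left pi_pos.le (by positivity) (pow_le_pow_right₀ one_le_two hk)

theorem pi_div_two_pow_le_pi (n : ℕ) : π / 2 ^ n ≤ π := by
  simpa using pi_div_two_pow_le 0 n.zero_le

theorem sigma_one_add_two_pow_sub_le (k : ℕ) :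
    σR (1 + 2 ^ k) - 2 * σR 1 ≤ (2 * π / 2 ^ k) ^ 2 - 2 / 2 ^ k := by
  rw [sq]
  refine hasSum_le (fun j => ?_) (hasSum_cosDefect k)
    (((hasSum_pi_div_two_pow_add k).mul_left (2 * π / 2 ^ k)).sub (hasSum_ite_eq 1 (2 / 2 ^ k)))
  have hb₀ : 0 < π / 2 ^ (j + k) := by positivity
  have hbk := pi_div_two_pow_le k (Nat.le_add_left k j)
  have hsq : 2 * (π / 2 ^ (j + k)) ^ 2 ≤ 2 * π / 2 ^ k * (π / 2 ^ (j + k)) := by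
    rw [mul_div_assoc, sq, ← mul_assoc]
    exact mul_le_mul_of_nonneg_right (by linarith) hb₀.le
  split_ifs with hj
  · subst hj
    have h := cosDefect_pi_div_two_le hb₀.le (by simpa using pi_div_two_pow_le 1 (by omega))
    have h4 : 4 / π * (π / 2 ^ (1 + k)) = 2 / 2 ^ k := by
      rw [pow_add]
      field_simp
      ring
    rw [pow_one]
    linarith [sq_nonneg (π / 2 ^ (1 + k))]
  · have h := cosDefect_le (by positivity) (pi_div_two_pow_le_pi j) hb₀.le (pi_div_two_pow_le_pi _)
    linarith

theorem sigma_one_add_two_pow_sub_neg {k : ℕ} (hk : 5 ≤ k) : σR (1 + 2 ^ k) - 2 * σR 1 < 0 := by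
  refine (sigma_one_add_two_pow_sub_le k).trans_lt ?_
  have h32 : (2 : ℝ) ^ 5 ≤ 2 ^ k := pow_le_pow_right₀ one_le_two hk
  have hπ : 2 * π ^ 2 < 2 ^ 5 := by nlinarith [pi_lt_d2, pi_pos]
  rw [sub_neg, div_pow, sq (2 ^ k : ℝ), ← div_div, div_lt_div_iff_of_pos_right (by positivity),
    div_lt_iff₀ (by positivity)]
  nlinarith

theorem abs_sigma_one_add_two_pow_sub_le (k : ℕ) :
    |σR (1 + 2 ^ k) - 2 * σR 1| ≤ (2 * π + 2) * (2 * π / 2 ^ k) := by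
  refine (hasSum_cosDefect k).norm_le_of_bounded ((hasSum_pi_div_two_pow_add k).mul_left _)
    fun j => ?_
  have hb₀ : 0 < π / 2 ^ (j + k) := by positivity
  have hbπ := pi_div_two_pow_le_pi (j + k)
  refine (abs_cosDefect_le _ _).trans ?_
  rw [abs_of_pos hb₀]
  nlinarith

theorem tendsto_sigma_one_add_two_pow :
    Tendsto (fun k : ℕ => σR (1 + 2 ^ k)) atTop (𝓝 (2 * σR 1)) := by
  rw [tendsto_iff_norm_sub_tendsto_zero]
  refine squeeze_zero (fun _ => norm_nonneg _) abs_sigma_one_add_two_pow_sub_le ?_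
  have h : Tendsto (fun k : ℕ => ((2 : ℝ) ^ k)⁻¹) atTop (𝓝 0) :=
    tendsto_inv_atTop_zero.comp (tendsto_pow_atTop_atTop_of_one_lt one_lt_two)
  simpa [div_eq_mul_inv] using (h.const_mul (2 * π)).const_mul (2 * π + 2)

/-- The additive subsemigroup of `ℝ` generated by `ℤ` together with the numbers
`σ_m` (`m ≥ 1`) is dense in `ℝ`. -/
theorem semigroup_generated_by_ints_and_sigma_dense :
    Dense (AddSubsemigroup.closure
      (Set.range ((↑) : ℤ → ℝ) ∪ {x : ℝ | ∃ m : ℤ, 1 ≤ m ∧ x = σR m}) : Set ℝ) := by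
  set Γ := AddSubsemigroup.closure
    (Set.range ((↑) : ℤ → ℝ) ∪ {x : ℝ | ∃ m : ℤ, 1 ≤ m ∧ x = σR m})
  have hZ (n : ℤ) : (n : ℝ) ∈ Γ := AddSubsemigroup.subset_closure (Or.inl ⟨n, rfl⟩)
  have hσ {m : ℤ} (hm : 1 ≤ m) : σR m ∈ Γ := AddSubsemigroup.subset_closure (Or.inr ⟨m, hm, rfl⟩)
  let M : AddSubmonoid ℝ := { Γ with zero_mem' := by simpa using hZ 0 }
  refine dense_of_zero_mem_closure_diff (S := M) hZ ?_
  by_cases hirr : Irrational (σR 1)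
  · exact zero_mem_closure_diff_of_irrational (S := M) hZ (hσ le_rfl) hirr
  obtain ⟨r, hr⟩ : ∃ r : ℚ, (r : ℝ) = σR 1 := by simpa [Irrational] using hirr
  refine zero_mem_closure_diff_of_tendsto (S := M) (l := atTop) (y := fun k : ℕ => σR (1 + 2 ^ k))
    (r := 2 * r) hZ (fun k => hσ (le_add_of_nonneg_right (by positivity))) ?_ ?_
  · simpa [hr] using tendsto_sigma_one_add_two_pow
  · filter_upwards [eventually_ge_atTop 5] with k hk
    simpa [hr, sub_eq_zero] using (sigma_one_add_two_pow_sub_neg hk).ne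
end

section
/- For every t > 0 the value F(it) + H(it) is a real number, and the map t ↦ F(it) + H(it) from (0, ∞) to ℝ is surjective: for every r ∈ ℝ there exists t > 0 with F(it) + H(it) = r. -/
/-- `H(w) = ∑_{l=1}^∞ (e(w/2^l) − 1)` (indexing: `l = l' + 1`, `l' : ℕ`). -/
noncomputable def H (w : ℂ) : ℂ := ∑' l : ℕ, (e (w / 2 ^ (l + 1)) - 1)

/-!
On the imaginary axis every term of `F` and `H` is real, so `g(t) = F(it) + H(it)` is a real
function of `t > 0`. Splitting off the first term of each series gives `g(t/2) = g(t) + 1`: the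
term `e^{-πt}` that `F(it/2)` has in excess of `F(it)` is exactly the term that `H(it)` has in
excess of `H(it/2)`, and only its `-1` survives. Hence `g` takes the values `g(1) + k` and
`g(1) - k` for every `k ∈ ℕ`, and since `g` is continuous on `(0, ∞)` it takes every real value.
-/

open Real Set

theorem exists_pos_eq_of_map_half_eq_add_one {g : ℝ → ℝ} (hg : ContinuousOn g (Ioi 0))
    (hhalf : ∀ t, 0 < t → g (t / 2) = g t + 1) (r : ℝ) : ∃ t, 0 < t ∧ g t = r := by
  have hpow : ∀ k : ℕ, ∀ t, 0 < t → g (t / 2 ^ k) = g t + k := by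
    intro k
    induction k with
    | zero => simp
    | succ k ih =>
      intro t ht
      rw [pow_succ, ← div_div, hhalf _ (by positivity), ih t ht]
      push_cast
      ring
  obtain ⟨k, hk⟩ := exists_nat_ge (r - g 1)
  obtain ⟨m, hm⟩ := exists_nat_ge (g 1 - r)
  have hlow : g (2 ^ m) = g 1 - m := by
    have h := hpow m (2 ^ m) (by positivity)
    rw [div_self (by positivity)] at h
    linarith
  have hhigh : g (1 / 2 ^ k) = g 1 + k := hpow k 1 one_pos
  exact isPreconnected_Ioi.intermediate_value (mem_Ioi.mpr (by positivity))
    (mem_Ioi.mpr (by positivity)) hg (show r ∈ Icc (g (2 ^ m)) (g (1 / 2 ^ k)) by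
      constructor <;> linarith)

lemma e_I_mul_ofReal (x : ℝ) : e (Complex.I * x) = (rexp (-(2 * π * x)) : ℂ) := by
  rw [e, Complex.ofReal_exp]
  congr 1
  push_cast
  linear_combination (2 * π * x : ℂ) * Complex.I_mul_I

noncomputable def FOnImAxis (t : ℝ) : ℝ := ∑' n : ℕ, rexp (-(2 * π * (2 ^ n * t)))

noncomputable def HOnImAxis (t : ℝ) : ℝ := ∑' l : ℕ, (rexp (-(2 * π * (t / 2 ^ (l + 1)))) - 1)

lemma F_I_mul_ofReal (t : ℝ) : F (Complex.I * t) = FOnImAxis t := by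
  rw [F, FOnImAxis, Complex.ofReal_tsum]
  congr 1 with n
  rw [← e_I_mul_ofReal]
  push_cast
  ring_nf

lemma H_I_mul_ofReal (t : ℝ) : H (Complex.I * t) = HOnImAxis t := by
  rw [H, HOnImAxis, Complex.ofReal_tsum]
  congr 1 with l
  rw [Complex.ofReal_sub, ← e_I_mul_ofReal]
  push_cast
  ring_nf

lemma exp_neg_two_pi_two_pow_mul_le {a t : ℝ} (ha : 0 < a) (hat : a ≤ t) (n : ℕ) :
    rexp (-(2 * π * (2 ^ n * t))) ≤ rexp (-(2 * π * a)) ^ n := by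
  rw [← Real.exp_nat_mul, Real.exp_le_exp]
  have hn : (n : ℝ) ≤ 2 ^ n := by exact_mod_cast Nat.lt_two_pow_self.le
  nlinarith [pi_pos, mul_le_mul hn hat ha.le (by positivity)]

lemma abs_exp_neg_two_pi_div_two_pow_sub_one_le {t : ℝ} (ht : 0 ≤ t) (l : ℕ) :
    |rexp (-(2 * π * (t / 2 ^ (l + 1)))) - 1| ≤ π * t * (1 / 2) ^ l := by
  have hx : 2 * π * (t / 2 ^ (l + 1)) = π * t * (1 / 2) ^ l := by
    rw [pow_succ, one_div, inv_pow]
    field_simp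
  have hnonneg : 0 ≤ π * t * (1 / 2) ^ l := by positivity
  rw [hx, abs_le]
  constructor
  · linarith [add_one_le_exp (-(π * t * (1 / 2) ^ l))]
  · linarith [exp_le_one_iff.mpr (neg_nonpos.mpr hnonneg)]

lemma exp_neg_two_pi_lt_one {a : ℝ} (ha : 0 < a) : rexp (-(2 * π * a)) < 1 :=
  exp_lt_one_iff.mpr (by nlinarith [pi_pos])

lemma summable_exp_neg_two_pi_two_pow_mul {t : ℝ} (ht : 0 < t) :
    Summable fun n : ℕ ↦ rexp (-(2 * π * (2 ^ n * t))) :=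
  .of_nonneg_of_le (fun _ ↦ (exp_pos _).le) (exp_neg_two_pi_two_pow_mul_le ht le_rfl)
    (summable_geometric_of_lt_one (exp_pos _).le (exp_neg_two_pi_lt_one ht))

lemma summable_exp_neg_two_pi_div_two_pow_sub_one {t : ℝ} (ht : 0 ≤ t) :
    Summable fun l : ℕ ↦ rexp (-(2 * π * (t / 2 ^ (l + 1)))) - 1 :=
  .of_norm_bounded ((summable_geometric_two).mul_left (π * t))
    (abs_exp_neg_two_pi_div_two_pow_sub_one_le ht)

lemma FOnImAxis_div_two {t : ℝ} (ht : 0 < t) :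
    FOnImAxis (t / 2) = rexp (-(π * t)) + FOnImAxis t := by
  rw [FOnImAxis, (summable_exp_neg_two_pi_two_pow_mul (half_pos ht)).tsum_eq_zero_add, FOnImAxis]
  congr 2
  · ring
  · ext n
    rw [pow_succ]
    ring_nf

lemma HOnImAxis_eq_add_div_two {t : ℝ} (ht : 0 ≤ t) :
    HOnImAxis t = rexp (-(π * t)) - 1 + HOnImAxis (t / 2) := by
  rw [HOnImAxis, (summable_exp_neg_two_pi_div_two_pow_sub_one ht).tsum_eq_zero_add, HOnImAxis]
  congr 2
  · ring_nf
  · ext l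
    rw [pow_succ]
    ring_nf

lemma continuousOn_FOnImAxis : ContinuousOn FOnImAxis (Ioi 0) := by
  refine continuousOn_of_forall_continuousAt fun t ht ↦ ?_
  have hbound : ContinuousOn FOnImAxis (Ici (t / 2)) :=
    continuousOn_tsum (fun n ↦ by fun_prop)
      (summable_geometric_of_lt_one (exp_pos _).le (exp_neg_two_pi_lt_one (half_pos ht)))
      fun n s hs ↦ by
        rw [norm_of_nonneg (exp_pos _).le]
        exact exp_neg_two_pi_two_pow_mul_le (half_pos ht) hs n
  exact hbound.continuousAt (Ici_mem_nhds (half_lt_self ht))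

lemma continuousOn_HOnImAxis : ContinuousOn HOnImAxis (Ioi 0) := by
  refine continuousOn_of_forall_continuousAt fun t ht ↦ ?_
  have hbound : ContinuousOn HOnImAxis (Icc 0 (t + 1)) :=
    continuousOn_tsum (fun l ↦ by fun_prop) (summable_geometric_two.mul_left (π * (t + 1)))
      fun l s hs ↦ (abs_exp_neg_two_pi_div_two_pow_sub_one_le hs.1 l).trans (by gcongr; exact hs.2)
  exact hbound.continuousAt (Icc_mem_nhds ht (lt_add_one t))

/-- For every `t > 0` the value `F(it) + H(it)` is real, and every real number
occurs as such a value for some `t > 0`. -/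
theorem F_plus_H_real_and_surjective :
    (∀ t : ℝ, 0 < t → (F (Complex.I * t) + H (Complex.I * t)).im = 0) ∧
    (∀ r : ℝ, ∃ t : ℝ, 0 < t ∧ F (Complex.I * t) + H (Complex.I * t) = (r : ℂ)) := by
  have hreal (t : ℝ) : F (Complex.I * t) + H (Complex.I * t) = ↑(FOnImAxis t + HOnImAxis t) := by
    rw [F_I_mul_ofReal, H_I_mul_ofReal, Complex.ofReal_add]
  refine ⟨fun t _ ↦ by rw [hreal, Complex.ofReal_im], fun r ↦ ?_⟩
  have hhalf (t : ℝ) (ht : 0 < t) : FOnImAxis (t / 2) + HOnImAxis (t / 2) =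
      FOnImAxis t + HOnImAxis t + 1 := by
    linarith [FOnImAxis_div_two ht, HOnImAxis_eq_add_div_two ht.le]
  obtain ⟨t, ht, hgt⟩ := exists_pos_eq_of_map_half_eq_add_one
    (continuousOn_FOnImAxis.add continuousOn_HOnImAxis) hhalf r
  exact ⟨t, ht, by rw [hreal, ← hgt, Pi.add_apply]⟩
end
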